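/- Let R be a random variable on the positive integers with P(R=1) = p_{01}^{10} and P(R=r) = p_{01}^{11}·(p_{11}^{11})^{r-2}·p_{11}^{10} for r ≥ 2, where p_{01}^{10}+p_{01}^{11}=1, p_{11}^{10}+p_{11}^{11}=1, and 0 < p_{11}^{11} < 1. Then the variance of R equals (p_{01}^{11}/(p_{11}^{10})²)·(p_{01}^{10} + p_{11}^{11}). -/

import Mathlib

/-! Shifting the index by two turns the first two moments of `R` into the series
`∑ (n + 2) ^ k * d ^ n` (`k = 1, 2`), which are combinations of the negative binomial series
`∑ (n + j).choose j * d ^ n = 1 / (1 - d) ^ (j + 1)`. This gives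
`E[R] = q + b s (2 - d) / (1 - d) ^ 2` and `E[R²] = q + b s (4 - 3d + d²) / (1 - d) ^ 3`,
and with `q = 1 - b`, `s = 1 - d` the variance simplifies to `b (q + d) / s ^ 2`. -/

section GeometricMoments

variable {𝕜 : Type*} [NormedField 𝕜] {d : 𝕜}

theorem hasSum_add_two_mul_geometric (hd : ‖d‖ < 1) :
    HasSum (fun n : ℕ => ((n : 𝕜) + 2) * d ^ n) ((2 - d) / (1 - d) ^ 2) := by
  have hd1 : 1 - d ≠ 0 := sub_ne_zero.mpr (fun h => by simp [← h] at hd)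
  rw [show (2 - d) / (1 - d) ^ 2 = 1 / (1 - d) ^ (1 + 1) + 1 / (1 - d) ^ (0 + 1) by
    field_simp; ring]
  refine ((hasSum_choose_mul_geometric_of_norm_lt_one 1 hd).add
    (hasSum_choose_mul_geometric_of_norm_lt_one 0 hd)).congr_fun fun n => ?_
  simp only [Nat.choose_one_right, Nat.choose_zero_right]
  push_cast
  ring

theorem hasSum_add_two_sq_mul_geometric (hd : ‖d‖ < 1) :
    HasSum (fun n : ℕ => ((n : 𝕜) + 2) ^ 2 * d ^ n) ((4 - 3 * d + d ^ 2) / (1 - d) ^ 3) := by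
  have hd1 : 1 - d ≠ 0 := sub_ne_zero.mpr (fun h => by simp [← h] at hd)
  rw [show (4 - 3 * d + d ^ 2) / (1 - d) ^ 3 =
      2 * (1 / (1 - d) ^ (2 + 1)) + (1 / (1 - d) ^ (1 + 1) + 1 / (1 - d) ^ (0 + 1)) by
    field_simp; ring]
  refine (((hasSum_choose_mul_geometric_of_norm_lt_one 2 hd).mul_left 2).add
    ((hasSum_choose_mul_geometric_of_norm_lt_one 1 hd).add
      (hasSum_choose_mul_geometric_of_norm_lt_one 0 hd))).congr_fun fun n => ?_
  have h : (2 * (n + 2).choose 2 : ℕ) = (n + 2) * (n + 1) := by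
    rw [Nat.choose_two_right, Nat.mul_div_cancel' (Nat.even_mul_pred_self _).two_dvd]; rfl
  replace h := congrArg (Nat.cast : ℕ → 𝕜) h
  push_cast at h
  rw [← mul_assoc, h, Nat.choose_one_right, Nat.choose_zero_right]
  push_cast
  ring

end GeometricMoments

def runLengthProb (q b s d : ℝ) (r : ℕ) : ℝ :=
  if r = 1 then q else if 2 ≤ r then b * d ^ (r - 2) * s else 0

section RunLength

variable {q b s d : ℝ}

theorem runLengthProb_add_two (n : ℕ) : runLengthProb q b s d (n + 2) = b * d ^ n * s := by
  simp [runLengthProb]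

theorem hasSum_mul_runLengthProb {g : ℕ → ℝ} {a : ℝ}
    (hg : HasSum (fun n => g (n + 2) * d ^ n) a) :
    HasSum (fun r => g r * runLengthProb q b s d r) (g 1 * q + b * s * a) := by
  refine (hasSum_nat_add_iff' 2).mp ?_
  have hhead : ∑ r ∈ Finset.range 2, g r * runLengthProb q b s d r = g 1 * q := by
    simp [Finset.sum_range_succ, runLengthProb]
  rw [hhead, add_sub_cancel_left]
  refine (hg.mul_left (b * s)).congr_fun fun n => ?_
  rw [runLengthProb_add_two]
  ring

theorem hasSum_runLengthProb_mean (hd : ‖d‖ < 1) :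
    HasSum (fun r : ℕ => (r : ℝ) * runLengthProb q b s d r)
      (q + b * s * ((2 - d) / (1 - d) ^ 2)) := by
  have h := hasSum_mul_runLengthProb (q := q) (b := b) (s := s) (g := fun r : ℕ => (r : ℝ))
    (by push_cast; exact hasSum_add_two_mul_geometric hd)
  rwa [Nat.cast_one, one_mul] at h

theorem hasSum_runLengthProb_secondMoment (hd : ‖d‖ < 1) :
    HasSum (fun r : ℕ => (r : ℝ) ^ 2 * runLengthProb q b s d r)
      (q + b * s * ((4 - 3 * d + d ^ 2) / (1 - d) ^ 3)) := by
  have h := hasSum_mul_runLengthProb (q := q) (b := b) (s := s) (g := fun r : ℕ => (r : ℝ) ^ 2)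
    (by push_cast; exact hasSum_add_two_sq_mul_geometric hd)
  rwa [Nat.cast_one, one_pow, one_mul] at h

end RunLength

/-- Variance of run length for the m=2 de Bruijn run-length distribution:
Var[R] = (b/s²)·(q + d). -/
theorem deBruijn_m2_variance_runLength
    (q b s d : ℝ) (hqb : q + b = 1) (hsd : s + d = 1)
    (hd0 : 0 < d) (hd1 : d < 1)
    (P : ℕ → ℝ)
    (hP : P = fun r => if r = 1 then q else if 2 ≤ r then b * d ^ (r - 2) * s else 0) :
    (∑' r : ℕ, (r : ℝ) ^ 2 * P r) - (∑' r : ℕ, (r : ℝ) * P r) ^ 2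
      = b / s ^ 2 * (q + d) := by
  obtain rfl : P = runLengthProb q b s d := hP
  have hd : ‖d‖ < 1 := by rwa [Real.norm_of_nonneg hd0.le]
  rw [(hasSum_runLengthProb_secondMoment hd).tsum_eq, (hasSum_runLengthProb_mean hd).tsum_eq]
  obtain rfl : q = 1 - b := by linarith
  obtain rfl : s = 1 - d := by linarith
  have : 1 - d ≠ 0 := by linarith
  field_simp
  ring
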